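/- Let G be a topologically sorted DAG on n nodes whose underlying undirected graph is a tree: the simple graph on Fin n with adjacency relation (i ≠ j ∧ (E i j ∨ E j i)) is connected and acyclic. Then the ideal Î_G ⊆ R̂ of imposed relations (with unit diagonal) is a prime ideal; in particular Î_G equals its saturation p̂_G at θ̂₀. -/

import Mathlib

open MvPolynomial Matrix

noncomputable section

/-- The parent set of a node `j` in the DAG with edge relation `E`. -/
def parents {n : ℕ} (E : Fin n → Fin n → Prop) [DecidableRel E] (j : Fin n) : Finset (Fin n) :=
  Finset.univ.filter (fun i => E i j)

/-- The minor of `M` with rows `A` and columns `B`, each listed in increasing order. -/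
def fminor {n : ℕ} {R : Type*} [CommRing R] (M : Matrix (Fin n) (Fin n) R)
    (A B : Finset (Fin n)) (h : B.card = A.card) : R :=
  Matrix.det (Matrix.of fun k l : Fin A.card =>
    M (A.orderEmbOfFin rfl k) (B.orderEmbOfFin h l))

/-- The generic symmetric matrix, with `(i,j)` entry the variable indexed by the unordered
pair `s(i,j)`. -/
def genMat (n : ℕ) : Matrix (Fin n) (Fin n) (MvPolynomial (Sym2 (Fin n)) ℂ) :=
  fun i j => X (Sym2.mk i j)

/-- The ideal of imposed relations `I_G`, generated by the minors `det M_{{i}∪K,{j}∪K}` over all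
pairs `i < j` with `¬ E i j`, where `K = pa(j)`. -/
def impIdeal {n : ℕ} (E : Fin n → Fin n → Prop) [DecidableRel E] :
    Ideal (MvPolynomial (Sym2 (Fin n)) ℂ) :=
  Ideal.span { f | ∃ i j : Fin n, ∃ _ : i < j, ∃ _ : ¬ E i j,
    ∃ h : (insert j (parents E j)).card = (insert i (parents E j)).card,
      f = fminor (genMat n) (insert i (parents E j)) (insert j (parents E j)) h }

/-- The product `θ₀` of all principal minors of the generic symmetric matrix. -/
def theta0 (n : ℕ) : MvPolynomial (Sym2 (Fin n)) ℂ :=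
  ∏ A : Finset (Fin n), fminor (genMat n) A A rfl

/-- The saturation `{f | ∃ m, g ^ m * f ∈ I}` of an ideal `I` at an element `g`. -/
def satIdeal {R : Type*} [CommRing R] (I : Ideal R) (g : R) : Ideal R where
  carrier := {f | ∃ m : ℕ, g ^ m * f ∈ I}
  zero_mem' := ⟨0, by simp⟩
  add_mem' := by
    rintro a b ⟨ma, ha⟩ ⟨mb, hb⟩
    refine ⟨ma + mb, ?_⟩
    have h : g ^ (ma + mb) * (a + b) = g ^ mb * (g ^ ma * a) + g ^ ma * (g ^ mb * b) := by
      ring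
    rw [h]
    exact I.add_mem (I.mul_mem_left _ ha) (I.mul_mem_left _ hb)
  smul_mem' := by
    rintro c a ⟨m, hm⟩
    refine ⟨m, ?_⟩
    have h : g ^ m * (c • a) = c * (g ^ m * a) := by
      simp only [smul_eq_mul]; ring
    rw [h]
    exact I.mul_mem_left _ hm


/-- The saturation `p_G` of `I_G` at `θ₀`. -/
def satPG {n : ℕ} (E : Fin n → Fin n → Prop) [DecidableRel E] :
    Ideal (MvPolynomial (Sym2 (Fin n)) ℂ) :=
  satIdeal (impIdeal E) (theta0 n)

/-- The generic symmetric matrix with unit diagonal, with off-diagonal `(i,j)` entry the variable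
indexed by the unordered pair `s(i,j)`. -/
def hatMat (n : ℕ) :
    Matrix (Fin n) (Fin n) (MvPolynomial {p : Sym2 (Fin n) // ¬ p.IsDiag} ℂ) :=
  fun i j =>
    if h : i = j then 1
    else X ⟨Sym2.mk i j, by simpa [Sym2.mk_isDiag_iff] using h⟩

/-- The ideal of imposed relations `Î_G` with unit diagonal, generated by the minors
`det M̂_{{i}∪K,{j}∪K}` over all pairs `i < j` with `¬ E i j`, where `K = pa(j)`. -/
def impIdealHat {n : ℕ} (E : Fin n → Fin n → Prop) [DecidableRel E] :
    Ideal (MvPolynomial {p : Sym2 (Fin n) // ¬ p.IsDiag} ℂ) :=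
  Ideal.span { f | ∃ i j : Fin n, ∃ _ : i < j, ∃ _ : ¬ E i j,
    ∃ h : (insert j (parents E j)).card = (insert i (parents E j)).card,
      f = fminor (hatMat n) (insert i (parents E j)) (insert j (parents E j)) h }

/-- The product `θ̂₀` of all principal minors of the generic unit-diagonal symmetric matrix. -/
def thetaHat (n : ℕ) : MvPolynomial {p : Sym2 (Fin n) // ¬ p.IsDiag} ℂ :=
  ∏ A : Finset (Fin n), fminor (hatMat n) A A rfl

/-- The saturation `p̂_G` of `Î_G` at `θ̂₀`. -/
def satPGhat {n : ℕ} (E : Fin n → Fin n → Prop) [DecidableRel E] :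
    Ideal (MvPolynomial {p : Sym2 (Fin n) // ¬ p.IsDiag} ℂ) :=
  satIdeal (impIdealHat E) (thetaHat n)

/-- The undirected graph underlying the DAG with edge relation `E`. -/
def underGraph {n : ℕ} (E : Fin n → Fin n → Prop) : SimpleGraph (Fin n) where
  Adj i j := i ≠ j ∧ (E i j ∨ E j i)
  symm := ⟨fun i j h => ⟨h.1.symm, h.2.symm⟩⟩
  loopless := ⟨fun i h => h.1 rfl⟩

/-!
Substitute for each variable `X s(a, b)` the correlation `Σ a b` of the tree model with edge
coefficients `X s(m, b)` (`treeCov`). In a polytree two parents of a node have no common ancestor,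
so `Σ` is the identity on `pa(j)`, and the minor with rows `{i} ∪ pa(j)` and columns `{j} ∪ pa(j)`
is, up to sign, the Schur complement `M i j - ∑ k ∈ pa(j), M i k * M k j`. Applied to `Σ` this
vanishes by the recursion defining `Σ`, so `Î_G` lies in the kernel of the substitution; applied
modulo `Î_G` it gives `X s(i, j) ≡ Σ i j` by induction on `j`, so the kernel lies in `Î_G`. Hence
`Î_G` is the kernel of a map to a domain, so prime, and `θ̂₀ ∉ Î_G` because the generators vanish
at `0` while `θ̂₀` evaluates to `1`.
-/

section Minors

variable {R : Type*} [CommRing R] {n : ℕ}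

theorem Matrix.det_submatrix_equiv_equiv {l m : Type*} [Fintype l] [DecidableEq l] [Fintype m]
    [DecidableEq m] (M : Matrix m m R) (σ τ : l ≃ m) :
    (M.submatrix σ τ).det = Equiv.Perm.sign (τ.trans σ.symm) * M.det := by
  have : M.submatrix σ τ = (M.submatrix σ σ).submatrix id (τ.trans σ.symm) := by
    ext x y; simp
  rw [this, det_permute', det_submatrix_equiv_self]

theorem Matrix.associated_det_submatrix {α ι κ : Type*} [Fintype ι] [DecidableEq ι]
    [Fintype κ] [DecidableEq κ] (M : Matrix α α R) {e₁ e₂ : ι → α} {f₁ f₂ : κ → α}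
    (he₁ : e₁.Injective) (he₂ : e₂.Injective) (hf₁ : f₁.Injective) (hf₂ : f₂.Injective)
    (h₁ : Set.range e₁ = Set.range f₁) (h₂ : Set.range e₂ = Set.range f₂) :
    Associated (M.submatrix e₁ e₂).det (M.submatrix f₁ f₂).det := by
  let σ : ι ≃ κ := (Equiv.ofInjective e₁ he₁).trans <|
    (Equiv.setCongr h₁).trans (Equiv.ofInjective f₁ hf₁).symm
  let τ : ι ≃ κ := (Equiv.ofInjective e₂ he₂).trans <|
    (Equiv.setCongr h₂).trans (Equiv.ofInjective f₂ hf₂).symm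
  have hσ (x : ι) : f₁ (σ x) = e₁ x := by simp [σ, Equiv.apply_ofInjective_symm]
  have hτ (x : ι) : f₂ (τ x) = e₂ x := by simp [τ, Equiv.apply_ofInjective_symm]
  have : M.submatrix e₁ e₂ = (M.submatrix f₁ f₂).submatrix σ τ := by
    ext x y; simp [hσ, hτ]
  rw [this, det_submatrix_equiv_equiv]
  exact associated_unit_mul_left _ _ ((Equiv.Perm.sign _).isUnit.map (Int.castRingHom R))

theorem Matrix.det_submatrix_sumElim_of_eq_one {α : Type*} [DecidableEq α] (N : Matrix α α R)
    (i j : α) (K : Finset α) (hK : ∀ k ∈ K, ∀ k' ∈ K, N k k' = (1 : Matrix α α R) k k') :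
    (N.submatrix (Sum.elim (fun _ : Unit => i) ((↑) : K → α))
      (Sum.elim (fun _ : Unit => j) ((↑) : K → α))).det = N i j - ∑ k ∈ K, N i k * N k j := by
  rw [← fromBlocks_toBlocks (N.submatrix _ _)]
  have h₂₂ : (N.submatrix (Sum.elim (fun _ : Unit => i) ((↑) : K → α))
      (Sum.elim (fun _ : Unit => j) ((↑) : K → α))).toBlocks₂₂ = 1 := by
    ext k k'
    simp only [toBlocks₂₂, of_apply, submatrix_apply, Sum.elim_inr, hK k k.2 k' k'.2,
      one_apply, Subtype.ext_iff]
  rw [h₂₂, det_fromBlocks_one₂₂, det_unique]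
  simp [toBlocks₁₁, toBlocks₁₂, toBlocks₂₁, mul_apply,
    Finset.sum_attach K (fun k => N i k * N k j)]

theorem fminor_insert_insert_associated (N : Matrix (Fin n) (Fin n) R) {i j : Fin n}
    {K : Finset (Fin n)} (hi : i ∉ K) (hj : j ∉ K)
    (hK : ∀ k ∈ K, ∀ k' ∈ K, N k k' = (1 : Matrix (Fin n) (Fin n) R) k k')
    (h : (insert j K).card = (insert i K).card) :
    Associated (fminor N (insert i K) (insert j K) h) (N i j - ∑ k ∈ K, N i k * N k j) := by
  rw [← N.det_submatrix_sumElim_of_eq_one i j K hK]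
  have hsum (a : Fin n) (ha : a ∉ K) :
      (Sum.elim (fun _ : Unit => a) ((↑) : K → Fin n)).Injective ∧
        Set.range (Sum.elim (fun _ : Unit => a) ((↑) : K → Fin n)) = ↑(insert a K) := by
    refine ⟨Function.Injective.sumElim (fun _ _ _ => rfl) Subtype.val_injective ?_, ?_⟩
    · rintro - ⟨k, hk⟩ rfl; exact ha hk
    · ext x; simp [Set.Sum.elim_range]
  exact N.associated_det_submatrix (Finset.orderEmbOfFin _ rfl).injective
    (Finset.orderEmbOfFin _ h).injective (hsum i hi).1 (hsum j hj).1
    (by rw [Finset.range_orderEmbOfFin, (hsum i hi).2])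
    (by rw [Finset.range_orderEmbOfFin, (hsum j hj).2])

theorem map_fminor {S : Type*} [CommRing S] (f : R →+* S)
    (M : Matrix (Fin n) (Fin n) R) (A B : Finset (Fin n)) (h : B.card = A.card) :
    f (fminor M A B h) = fminor (M.map f) A B h :=
  RingHom.map_det f _

theorem fminor_one_self (A : Finset (Fin n)) :
    fminor (1 : Matrix (Fin n) (Fin n) R) A A rfl = 1 :=
  (congrArg Matrix.det (Matrix.submatrix_one_embedding (A.orderEmbOfFin rfl).toEmbedding)).trans
    Matrix.det_one

theorem fminor_one_eq_zero {A B : Finset (Fin n)} {a : Fin n} (haA : a ∈ A)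
    (haB : a ∉ B) (h : B.card = A.card) : fminor (1 : Matrix (Fin n) (Fin n) R) A B h = 0 := by
  obtain ⟨r, hr⟩ : a ∈ Set.range (A.orderEmbOfFin rfl) := by simpa using haA
  refine Matrix.det_eq_zero_of_row_eq_zero r fun l => Matrix.one_apply_ne ?_
  rw [hr]
  rintro rfl
  exact haB (B.orderEmbOfFin_mem h l)

end Minors

theorem satIdeal_eq_self {R : Type*} [CommRing R] {I : Ideal R} (hI : I.IsPrime) {g : R}
    (hg : g ∉ I) : satIdeal I g = I :=
  le_antisymm (fun _ ⟨m, hm⟩ => (hI.mem_or_mem hm).resolve_left (mt (hI.mem_of_pow_mem m) hg))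
    fun f hf => ⟨0, by simpa using hf⟩

theorem SimpleGraph.reachable_of_reflTransGen {n : ℕ} {E : Fin n → Fin n → Prop}
    (hE : ∀ i j, E i j → i < j) {G : SimpleGraph (Fin n)}
    {j : Fin n} (hG : ∀ x y, E x y → y < j → G.Adj x y) {c a : Fin n}
    (hca : Relation.ReflTransGen E c a) (haj : a < j) : G.Reachable c a := by
  induction hca with
  | refl => rfl
  | tail _ hba ih => exact (ih ((hE _ _ hba).trans haj)).trans (hG _ _ hba haj).reachable

@[simp]
theorem mem_parents {n : ℕ} (E : Fin n → Fin n → Prop) [DecidableRel E] {i j : Fin n} :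
    i ∈ parents E j ↔ E i j := by
  simp [parents]

abbrev HatRing (n : ℕ) := MvPolynomial {p : Sym2 (Fin n) // ¬ p.IsDiag} ℂ

section HatMat

variable {n : ℕ}

theorem hatMat_self (a : Fin n) : hatMat n a a = 1 := dif_pos rfl

theorem hatMat_comm (a b : Fin n) : hatMat n a b = hatMat n b a := by
  rcases eq_or_ne a b with rfl | hab
  · rfl
  · simp only [hatMat, dif_neg hab, dif_neg hab.symm, Sym2.eq_swap]

theorem exists_X_eq_hatMat (p : {p : Sym2 (Fin n) // ¬ p.IsDiag}) :
    ∃ a b, (MvPolynomial.X p : HatRing n) = hatMat n a b := by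
  obtain ⟨p, hp⟩ := p
  induction p using Sym2.ind with
  | _ a b =>
    have hab : a ≠ b := by simpa [Sym2.mk_isDiag_iff] using hp
    exact ⟨a, b, by rw [hatMat, dif_neg hab]⟩

theorem hatMat_map_constantCoeff : (hatMat n).map MvPolynomial.constantCoeff = 1 := by
  ext a b
  rcases eq_or_ne a b with rfl | hab
  · simp [hatMat]
  · simp [hatMat, hab]

theorem thetaHat_notMem_impIdealHat (E : Fin n → Fin n → Prop) [DecidableRel E] :
    thetaHat n ∉ impIdealHat E := by
  have hle : impIdealHat E ≤ RingHom.ker (MvPolynomial.constantCoeff (R := ℂ)) := by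
    rw [impIdealHat, Ideal.span_le]
    rintro _ ⟨i, j, hij, hnE, h, rfl⟩
    rw [SetLike.mem_coe, RingHom.mem_ker, map_fminor, hatMat_map_constantCoeff]
    exact fminor_one_eq_zero (Finset.mem_insert_self _ _) (by simpa [hij.ne] using hnE) h
  intro hmem
  have := RingHom.mem_ker.1 (hle hmem)
  simp [thetaHat, map_prod, map_fminor, hatMat_map_constantCoeff, fminor_one_self] at this

end HatMat

section TreeCov

variable {n : ℕ} (E : Fin n → Fin n → Prop) [DecidableRel E]

/-- The correlation of `a` and `b` in the unit-variance structural equation model on `E` with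
coefficient `X s(m, b)` on each edge `m → b`. The guard `m < b` always holds when `E` is
topologically sorted; it is only there for termination. -/
def treeCov (a b : Fin n) : HatRing n :=
  if a = b then 1
  else if a < b then ∑ m ∈ parents E b, if m < b then hatMat n m b * treeCov a m else 0
  else treeCov b a
termination_by (max a b, if a < b then 0 else 1)
decreasing_by
  · exact Prod.Lex.left _ _ (by grind)
  · rw [max_comm]
    exact Prod.Lex.right _ (by grind)

theorem treeCov_self (a : Fin n) : treeCov E a a = 1 := by
  rw [treeCov, if_pos rfl]

theorem treeCov_comm (a b : Fin n) : treeCov E a b = treeCov E b a := by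
  rcases lt_trichotomy a b with h | rfl | h
  · conv_rhs => rw [treeCov, if_neg h.ne', if_neg (lt_asymm h)]
  · rfl
  · rw [treeCov, if_neg h.ne', if_neg (lt_asymm h)]

variable {E}

theorem treeCov_of_lt (hE : ∀ i j, E i j → i < j) {a b : Fin n} (hab : a < b) :
    treeCov E a b = ∑ m ∈ parents E b, hatMat n m b * treeCov E a m := by
  rw [treeCov, if_neg hab.ne, if_pos hab]
  refine Finset.sum_congr rfl fun m hm => ?_
  rw [if_pos (hE m b ((mem_parents E).1 hm))]

theorem treeCov_eq_zero_of_no_common_ancestor (hE : ∀ i j, E i j → i < j) {a b : Fin n}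
    (h : ∀ c, Relation.ReflTransGen E c a → Relation.ReflTransGen E c b → False) :
    treeCov E a b = 0 := by
  induction a, b using treeCov.induct with
  | case1 b => exact (h b .refl .refl).elim
  | case2 a b _ hab ih =>
    rw [treeCov_of_lt hE hab]
    refine Finset.sum_eq_zero fun m hm => ?_
    have hmb := (mem_parents E).1 hm
    rw [ih m (hE m b hmb) fun c hca hcm => h c hca (hcm.tail hmb), mul_zero]
  | case3 a b _ _ ih => rw [treeCov_comm, ih fun c hcb hca => h c hca hcb]

/-- A common ancestor `c` of `k` and `k'` would connect `k` to `j` through `c` and `k'`, avoiding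
the edge `k → j`, which is a bridge of the tree. -/
theorem treeCov_coparents_eq_zero (hE : ∀ i j, E i j → i < j) (hT : (underGraph E).IsAcyclic)
    {j k k' : Fin n} (hk : E k j) (hk' : E k' j) (hne : k ≠ k') : treeCov E k k' = 0 := by
  refine treeCov_eq_zero_of_no_common_ancestor hE fun c hck hck' => ?_
  have hbridge := SimpleGraph.isAcyclic_iff_forall_adj_isBridge.1 hT
    (show (underGraph E).Adj k j from ⟨(hE k j hk).ne, .inl hk⟩)
  refine SimpleGraph.isBridge_iff.1 hbridge ?_
  set G := (underGraph E).deleteEdges {s(k, j)}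
  have hG (x y : Fin n) (hxy : E x y) (hy : y < j) : G.Adj x y := by
    rw [SimpleGraph.deleteEdges_adj]
    refine ⟨⟨(hE x y hxy).ne, .inl hxy⟩, ?_⟩
    have := (hE x y hxy).trans hy
    simp only [Set.mem_singleton_iff, Sym2.eq_iff]
    omega
  have hk'j : G.Adj k' j := by
    rw [SimpleGraph.deleteEdges_adj]
    refine ⟨⟨(hE k' j hk').ne, .inl hk'⟩, ?_⟩
    simp only [Set.mem_singleton_iff, Sym2.eq_iff]
    grind
  exact ((G.reachable_of_reflTransGen hE hG hck (hE k j hk)).symm.trans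
    (G.reachable_of_reflTransGen hE hG hck' (hE k' j hk'))).trans hk'j.reachable

theorem treeCov_of_edge (hE : ∀ i j, E i j → i < j) (hT : (underGraph E).IsAcyclic)
    {k j : Fin n} (hkj : E k j) : treeCov E k j = hatMat n k j := by
  rw [treeCov_of_lt hE (hE k j hkj), Finset.sum_eq_single k, treeCov_self, mul_one]
  · intro m hm hmk
    rw [treeCov_coparents_eq_zero hE hT hkj ((mem_parents E).1 hm) (Ne.symm hmk), mul_zero]
  · exact fun hk => (hk ((mem_parents E).2 hkj)).elim

theorem treeCov_eq_one_apply_of_mem_parents (hE : ∀ i j, E i j → i < j)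
    (hT : (underGraph E).IsAcyclic) {j : Fin n} : ∀ k ∈ parents E j, ∀ k' ∈ parents E j,
      treeCov E k k' = (1 : Matrix (Fin n) (Fin n) (HatRing n)) k k' := by
  intro k hk k' hk'
  rcases eq_or_ne k k' with rfl | hne
  · rw [treeCov_self, Matrix.one_apply_eq]
  · rw [Matrix.one_apply_ne hne,
      treeCov_coparents_eq_zero hE hT ((mem_parents E).1 hk) ((mem_parents E).1 hk') hne]

variable (E) in
def treeCovHom : HatRing n →ₐ[ℂ] HatRing n :=
  MvPolynomial.aeval fun p => Sym2.lift ⟨treeCov E, treeCov_comm E⟩ p.1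

theorem treeCovHom_hatMat (a b : Fin n) : treeCovHom E (hatMat n a b) = treeCov E a b := by
  unfold hatMat
  split_ifs with h
  · rw [map_one, h, treeCov_self]
  · simp [treeCovHom]

theorem associated_map_generator (hE : ∀ i j, E i j → i < j) {S : Type*} [CommRing S]
    (ψ : HatRing n →+* S) {i j : Fin n} (hnE : ¬ E i j)
    (hK : ∀ k ∈ parents E j, ∀ k' ∈ parents E j,
      ψ (hatMat n k k') = (1 : Matrix (Fin n) (Fin n) S) k k')
    (h : (insert j (parents E j)).card = (insert i (parents E j)).card) :
    Associated (ψ (fminor (hatMat n) (insert i (parents E j)) (insert j (parents E j)) h))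
      (ψ (hatMat n i j) - ∑ k ∈ parents E j, ψ (hatMat n i k) * ψ (hatMat n k j)) := by
  rw [map_fminor]
  exact fminor_insert_insert_associated _ (by simpa using hnE)
    (by simpa using fun h => (hE j j h).false) hK h

theorem impIdealHat_le_ker (hE : ∀ i j, E i j → i < j) (hT : (underGraph E).IsAcyclic) :
    impIdealHat E ≤ RingHom.ker (treeCovHom E) := by
  rw [impIdealHat, Ideal.span_le]
  rintro _ ⟨i, j, hij, hnE, h, rfl⟩
  have hK := treeCov_eq_one_apply_of_mem_parents hE hT (j := j)
  simp_rw [← treeCovHom_hatMat (E := E)] at hK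
  refine ((associated_map_generator hE (treeCovHom E).toRingHom hnE hK h).eq_zero_iff).2 ?_
  simp only [AlgHom.toRingHom_eq_coe, RingHom.coe_coe, treeCovHom_hatMat]
  rw [treeCov_of_lt hE hij, sub_eq_zero]
  refine Finset.sum_congr rfl fun k hk => ?_
  rw [treeCov_of_edge hE hT ((mem_parents E).1 hk), mul_comm]

local notation "π" => Ideal.Quotient.mk (impIdealHat E)

theorem mk_hatMat_eq_mk_treeCov_of_forall_lt {a b : Fin n}
    (h : ∀ i j, i < j → j ≤ max a b → π (hatMat n i j) = π (treeCov E i j)) :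
    π (hatMat n a b) = π (treeCov E a b) := by
  rcases lt_trichotomy a b with hab | rfl | hab
  · exact h a b hab (le_max_right a b)
  · rw [hatMat_self, treeCov_self]
  · rw [hatMat_comm, treeCov_comm]
    exact h b a hab (le_max_left a b)

theorem mk_hatMat_eq_mk_treeCov (hE : ∀ i j, E i j → i < j) (hT : (underGraph E).IsAcyclic)
    (a b : Fin n) : π (hatMat n a b) = π (treeCov E a b) := by
  suffices key : ∀ j i : Fin n, i < j → π (hatMat n i j) = π (treeCov E i j) from
    mk_hatMat_eq_mk_treeCov_of_forall_lt fun i j hij _ => key j i hij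
  intro j
  induction j using WellFoundedLT.induction with
  | _ j ih =>
  have ih' {a b : Fin n} (ha : a < j) (hb : b < j) : π (hatMat n a b) = π (treeCov E a b) :=
    mk_hatMat_eq_mk_treeCov_of_forall_lt fun i j' hij hle =>
      ih j' (hle.trans_lt (max_lt ha hb)) i hij
  intro i hij
  by_cases hEij : E i j
  · rw [treeCov_of_edge hE hT hEij]
  have hcard : (insert j (parents E j)).card = (insert i (parents E j)).card := by
    rw [Finset.card_insert_of_notMem (by simpa using fun h => (hE j j h).false),
      Finset.card_insert_of_notMem (by simpa using hEij)]
  have hK : ∀ k ∈ parents E j, ∀ k' ∈ parents E j,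
      π (hatMat n k k') = (1 : Matrix (Fin n) (Fin n) _) k k' := fun k hk k' hk' => by
    rw [ih' (hE k j ((mem_parents E).1 hk)) (hE k' j ((mem_parents E).1 hk')),
      treeCov_eq_one_apply_of_mem_parents hE hT k hk k' hk', Matrix.one_apply, Matrix.one_apply]
    split_ifs <;> simp
  have hgen := (associated_map_generator hE π hEij hK hcard).eq_zero_iff.1
    (Ideal.Quotient.eq_zero_iff_mem.2 (Ideal.subset_span ⟨i, j, hij, hEij, hcard, rfl⟩))
  rw [sub_eq_zero] at hgen
  rw [hgen, treeCov_of_lt hE hij, map_sum]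
  refine Finset.sum_congr rfl fun k hk => ?_
  rw [map_mul, ih' hij (hE k j ((mem_parents E).1 hk)), mul_comm]

theorem mkₐ_comp_treeCovHom (hE : ∀ i j, E i j → i < j) (hT : (underGraph E).IsAcyclic) :
    (Ideal.Quotient.mkₐ ℂ (impIdealHat E)).comp (treeCovHom E) =
      Ideal.Quotient.mkₐ ℂ (impIdealHat E) := by
  refine MvPolynomial.algHom_ext fun p => ?_
  obtain ⟨a, b, hp⟩ := exists_X_eq_hatMat p
  simp [hp, treeCovHom_hatMat, mk_hatMat_eq_mk_treeCov hE hT]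

theorem impIdealHat_eq_ker (hE : ∀ i j, E i j → i < j) (hT : (underGraph E).IsAcyclic) :
    impIdealHat E = RingHom.ker (treeCovHom E) := by
  refine le_antisymm (impIdealHat_le_ker hE hT) fun f hf => ?_
  rw [← Ideal.Quotient.eq_zero_iff_mem, ← Ideal.Quotient.mkₐ_eq_mk ℂ,
    ← mkₐ_comp_treeCovHom hE hT, AlgHom.comp_apply, RingHom.mem_ker.1 hf, map_zero]

end TreeCov

theorem impIdealHat_isPrime_of_tree_general {n : ℕ}
    (E : Fin n → Fin n → Prop) [DecidableRel E] (hE : ∀ i j, E i j → i < j)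
    (htree : (underGraph E).IsTree) :
    (impIdealHat E).IsPrime ∧ impIdealHat E = satPGhat E := by
  have hprime : (impIdealHat E).IsPrime := by
    rw [impIdealHat_eq_ker hE htree.isAcyclic]
    exact RingHom.ker_isPrime _
  exact ⟨hprime, (satIdeal_eq_self hprime (thetaHat_notMem_impIdealHat E)).symm⟩

/-- Proposition 8 of the paper: for a directed tree model `T`, the ideal `Î_T` of imposed
relations (with unit diagonal) is prime; in particular it equals its saturation `p̂_T`. -/
theorem impIdealHat_isPrime_of_tree {n : ℕ} (hn : 1 ≤ n)
    (E : Fin n → Fin n → Prop) [DecidableRel E] (hE : ∀ i j, E i j → i < j)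
    (htree : (underGraph E).IsTree) :
    (impIdealHat E).IsPrime ∧ impIdealHat E = satPGhat E :=
  impIdealHat_isPrime_of_tree_general E hE htree
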